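/- arXiv:2306.05613 — 2 statements merged into one kernel-verified Lean document; each statement's English description precedes it below -/
import Mathlib

section
/- Let p, q ∈ ℝⁿ be probability vectors (nonnegative entries summing to 1) such that the lexicographically-first index achieving the maximum entry of p differs from the lexicographically-first index achieving the maximum entry of q. Then the inner product ∑_{i=1}^n p_i q_i ≤ 1/2. -/
open Finset

/-- `i` is the lexicographically-first index attaining the maximum entry of `p`. -/
def isFirstArgmax {n : ℕ} (p : Fin n → ℝ) (i : Fin n) : Prop :=
  (∀ j, p j ≤ p i) ∧ ∀ j, j < i → p j < p i

/-- If the lexicographically-first argmax of the probability vector `p` differs from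
the lexicographically-first argmax of the probability vector `q`, then
`∑ i, p i * q i ≤ 1/2`. -/
theorem stmt7 {n : ℕ} (p q : Fin n → ℝ)
    (hp0 : ∀ i, 0 ≤ p i) (hq0 : ∀ i, 0 ≤ q i)
    (hp1 : ∑ i, p i = 1) (hq1 : ∑ i, q i = 1)
    (i j : Fin n) (hi : isFirstArgmax p i) (hj : isFirstArgmax q j) (hij : i ≠ j) :
    ∑ k, p k * q k ≤ 1 / 2 := by
  obtain ⟨hpmax, -⟩ := hi
  obtain ⟨hqmax, -⟩ := hj
  by_cases ha : p i ≤ 1 / 2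
  · calc ∑ k, p k * q k ≤ ∑ k, p i * q k := by
          apply Finset.sum_le_sum
          intro k _
          exact mul_le_mul_of_nonneg_right (hpmax k) (hq0 k)
    _ = p i := by rw [← Finset.mul_sum, hq1, mul_one]
    _ ≤ 1 / 2 := ha
  by_cases hb : q j ≤ 1 / 2
  · calc ∑ k, p k * q k ≤ ∑ k, p k * q j := by
          apply Finset.sum_le_sum
          intro k _
          exact mul_le_mul_of_nonneg_left (hqmax k) (hp0 k)
    _ = q j := by rw [← Finset.sum_mul, hp1, one_mul]
    _ ≤ 1 / 2 := hb
  push_neg at ha hb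
  -- q i + q j ≤ 1
  have hqij : q i + q j ≤ 1 := by
    have hsub : ({i, j} : Finset (Fin n)) ⊆ Finset.univ := Finset.subset_univ _
    have := Finset.sum_le_sum_of_subset_of_nonneg hsub
      (fun k _ _ => hq0 k)
    rw [Finset.sum_pair hij, hq1] at this
    exact this
  -- sum over k ≠ i bound
  have hsplit : ∑ k, p k * q k = p i * q i + ∑ k ∈ Finset.univ.erase i, p k * q k := by
    rw [← Finset.add_sum_erase _ _ (Finset.mem_univ i)]
  have hrest : ∑ k ∈ Finset.univ.erase i, p k * q k ≤ q j * (1 - p i) := by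
    have h1 : ∑ k ∈ Finset.univ.erase i, p k * q k ≤ ∑ k ∈ Finset.univ.erase i, p k * q j :=
      Finset.sum_le_sum fun k _ => mul_le_mul_of_nonneg_left (hqmax k) (hp0 k)
    have h2 : ∑ k ∈ Finset.univ.erase i, p k = 1 - p i := by
      have := Finset.add_sum_erase Finset.univ p (Finset.mem_univ i)
      rw [hp1] at this
      linarith
    rw [← Finset.sum_mul, h2] at h1
    linarith [h1]
  have hpi1 : p i ≤ 1 := by
    have hsub : ({i} : Finset (Fin n)) ⊆ Finset.univ := Finset.subset_univ _
    have := Finset.sum_le_sum_of_subset_of_nonneg hsub (fun k _ _ => hp0 k)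
    rw [Finset.sum_singleton, hp1] at this
    exact this
  have hqi : q i ≤ 1 - q j := by linarith
  have hpi0 := hp0 i
  nlinarith [hsplit, hrest, mul_le_mul_of_nonneg_left hqi hpi0,
    mul_pos (by linarith : (0:ℝ) < 2 * p i - 1) (by linarith : (0:ℝ) < 2 * q j - 1)]
end

section
/- Let X and Y be independent random variables on {0,1}^m (bitstrings of length m, with XOR as group operation), and let r ∈ {0,1}^m. If the most likely value of X XORed with the most likely value of Y does not equal r (under lexicographic tie-breaking of argmaxes), then Pr[X ⊕ Y = r] ≤ 1/2. -/
open MeasureTheory ProbabilityTheory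

/-- Lexicographic strict order on bitstrings (`false < true`). -/
def lexLt {m : ℕ} (x y : Fin m → Bool) : Prop :=
  ∃ i : Fin m, (∀ j, j < i → x j = y j) ∧ x i < y i

/-- `w` is the most likely value of a distribution `μ` on bitstrings, with ties broken
by taking the lexicographically first maximizer. -/
def isMostLikely {m : ℕ} (μ : Measure (Fin m → Bool)) (w : Fin m → Bool) : Prop :=
  (∀ z, μ {z} ≤ μ {w}) ∧ ∀ z, μ {z} = μ {w} → z ≠ w → lexLt w z

/-!
By independence, `Pr[X + Y = r] = ∑ z, p z * q (-z + r)` with `p`, `q` the laws of `X`, `Y`: the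
inner product of two probability vectors whose modes `xmax` and `r - ymax` differ. Such an inner
product is at most each of the two maxima `P`, `Q`, and, splitting off the term at `xmax`, at most
`P (1 - Q) + (1 - P) Q`. Either `P` or `Q` is at most `1/2`, or both exceed it and then
`1/2 - (P (1 - Q) + (1 - P) Q) = 2 (P - 1/2) (Q - 1/2) ≥ 0`.
-/

section ProbabilityVector

variable {α : Type*} [Fintype α] {p q : α → ℝ}

lemma sum_mul_le_of_le_of_sum_eq_one (hp0 : ∀ z, 0 ≤ p z) (hps : ∑ z, p z = 1) {c : ℝ}
    (hq : ∀ z, q z ≤ c) : ∑ z, p z * q z ≤ c :=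
  calc ∑ z, p z * q z ≤ ∑ z, p z * c :=
        Finset.sum_le_sum fun z _ => mul_le_mul_of_nonneg_left (hq z) (hp0 z)
    _ = c := by rw [← Finset.sum_mul, hps, one_mul]

lemma sum_mul_le_of_ne [DecidableEq α] (hp0 : ∀ z, 0 ≤ p z) (hq0 : ∀ z, 0 ≤ q z)
    (hps : ∑ z, p z = 1) (hqs : ∑ z, q z = 1) {x y : α} (hy : ∀ z, q z ≤ q y) (hxy : x ≠ y) :
    ∑ z, p z * q z ≤ p x * (1 - q y) + (1 - p x) * q y := by
  have hqx : q x ≤ 1 - q y := by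
    have := Finset.sum_le_univ_sum_of_nonneg (s := {x, y}) hq0
    rw [Finset.sum_pair hxy, hqs] at this
    linarith
  have hrest : ∑ z ∈ Finset.univ.erase x, p z * q z ≤ (1 - p x) * q y := by
    rw [← Finset.sum_erase_add _ _ (Finset.mem_univ x), ← eq_sub_iff_add_eq] at hps
    rw [← hps, Finset.sum_mul]
    exact Finset.sum_le_sum fun z _ => mul_le_mul_of_nonneg_left (hy z) (hp0 z)
  rw [← Finset.add_sum_erase _ _ (Finset.mem_univ x)]
  exact add_le_add (mul_le_mul_of_nonneg_left hqx (hp0 x)) hrest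

lemma sum_mul_le_half_of_ne (hp0 : ∀ z, 0 ≤ p z) (hq0 : ∀ z, 0 ≤ q z)
    (hps : ∑ z, p z = 1) (hqs : ∑ z, q z = 1) {x y : α} (hx : ∀ z, p z ≤ p x)
    (hy : ∀ z, q z ≤ q y) (hxy : x ≠ y) : ∑ z, p z * q z ≤ 1 / 2 := by
  classical
  have hQ := sum_mul_le_of_le_of_sum_eq_one hp0 hps hy
  have hP : ∑ z, p z * q z ≤ p x := by
    simp_rw [mul_comm (p _)]
    exact sum_mul_le_of_le_of_sum_eq_one hq0 hqs hx
  have hPQ := sum_mul_le_of_ne hp0 hq0 hps hqs hy hxy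
  by_cases hQ2 : q y ≤ 1 / 2
  · linarith
  by_cases hP2 : p x ≤ 1 / 2
  · linarith
  nlinarith

end ProbabilityVector

section FiniteGroup

variable {G : Type*} [AddGroup G] [Fintype G] [MeasurableSpace G] [MeasurableSingletonClass G]

lemma sum_measure_singleton_mul_neg_add_le_half {μ ν : Measure G} [IsProbabilityMeasure μ]
    [IsProbabilityMeasure ν] {x y r : G} (hx : ∀ z, μ {z} ≤ μ {x}) (hy : ∀ z, ν {z} ≤ ν {y})
    (hxy : x + y ≠ r) : ∑ z, μ {z} * ν {-z + r} ≤ 1 / 2 := by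
  have hsum (ρ : Measure G) [IsProbabilityMeasure ρ] : ∑ z, ρ.real {z} = 1 := by simp
  have hreal : ∑ z, μ.real {z} * ν.real {-z + r} ≤ 1 / 2 := by
    refine sum_mul_le_half_of_ne (x := x) (y := r - y) (fun _ => measureReal_nonneg)
      (fun _ => measureReal_nonneg) (hsum μ) ?_ (fun z => ?_) (fun z => ?_) ?_
    · rw [← hsum ν]
      exact ((Equiv.neg G).trans (Equiv.addRight r)).sum_comp fun z => ν.real {z}
    · exact ENNReal.toReal_mono (measure_ne_top _ _) (hx z)
    · rw [neg_sub, sub_add_cancel]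
      exact ENNReal.toReal_mono (measure_ne_top _ _) (hy _)
    · rintro rfl
      exact hxy (sub_add_cancel r y)
  rw [← ENNReal.toReal_le_toReal (ENNReal.sum_ne_top.2 fun _ _ => by finiteness) (by norm_num),
    ENNReal.toReal_sum fun _ _ => by finiteness]
  simpa [measureReal_def] using hreal

lemma ProbabilityTheory.IndepFun.measure_add_eq_sum {Ω : Type*} [MeasurableSpace Ω]
    {μ : Measure Ω} {X Y : Ω → G} (hX : Measurable X) (hY : Measurable Y) (h : IndepFun X Y μ)
    (r : G) : μ {ω | X ω + Y ω = r} = ∑ z, μ.map X {z} * μ.map Y {-z + r} := by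
  have hevent : {ω | X ω + Y ω = r} = ⋃ z ∈ Finset.univ, X ⁻¹' {z} ∩ Y ⁻¹' {-z + r} := by
    ext ω
    simp [eq_neg_add_iff_add_eq]
  rw [hevent, measure_biUnion_finset]
  · refine Finset.sum_congr rfl fun z _ => ?_
    rw [Measure.map_apply hX (measurableSet_singleton _),
      Measure.map_apply hY (measurableSet_singleton _)]
    exact h.measure_inter_preimage_eq_mul _ _ (measurableSet_singleton _)
      (measurableSet_singleton _)
  · exact fun a _ b _ hab => Disjoint.mono Set.inter_subset_left Set.inter_subset_left
      ((Set.disjoint_singleton.2 hab).preimage X)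
  · exact fun z _ => (hX (measurableSet_singleton _)).inter (hY (measurableSet_singleton _))

end FiniteGroup

/-- If `X`, `Y` are independent random bitstrings whose most likely values (with
lexicographic tie-breaking) XOR to something other than `r`, then
`Pr[X ⊕ Y = r] ≤ 1/2`. -/
theorem stmt8 {Ω : Type*} [MeasureSpace Ω] [IsProbabilityMeasure (volume : Measure Ω)]
    (m : ℕ) (X Y : Ω → (Fin m → Bool)) (hX : Measurable X) (hY : Measurable Y)
    (hind : IndepFun X Y volume)
    (xmax ymax r : Fin m → Bool)
    (hx : isMostLikely (Measure.map X volume) xmax)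
    (hy : isMostLikely (Measure.map Y volume) ymax)
    (hne : (fun i => xor (xmax i) (ymax i)) ≠ r) :
    volume {ω | (fun i => xor (X ω i) (Y ω i)) = r} ≤ 1 / 2 := by
  have := Measure.isProbabilityMeasure_map (μ := volume) hX.aemeasurable
  have := Measure.isProbabilityMeasure_map (μ := volume) hY.aemeasurable
  -- `Bool` is a Boolean ring, so `+` on `Fin m → Bool` is pointwise `xor`.
  change volume {ω | X ω + Y ω = r} ≤ 1 / 2
  rw [hind.measure_add_eq_sum hX hY]
  exact sum_measure_singleton_mul_neg_add_le_half hx.1 hy.1 hne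
end
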